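/- Let p be a power of 2 and m ≥ 4 an even integer. Set R(x) := ∑_{i=1}^{m/2} x^{p^{2i−1}} ∈ F_p[x] (of degree p^{m−1}), and for each k ≥ 1 let N_k := |{(x,y) ∈ F_{p^k} × F_{p^k} : y^p + y = x·R(x)}|. Then N_{2m} = p^{2m} − (p−1)·p^{2m−1} (i.e. the curve C_R is F_{p^{2m}}-minimal), and for every k with 1 ≤ k < 2m one has (N_k − p^k)² ≠ (p−1)²·p^{2(m−1)}·p^k (i.e. C_R is not F_{p^k}-extremal); hence the F_p-period of C_R is 2m and its parity is +1. -/

import Mathlib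

open Finset

open scoped Classical

noncomputable section

/-- Length-two Witt vectors, with the operations specialised to characteristic two. -/
def W2 (R : Type*) := R × R

namespace W2

variable {R : Type*} [CommRing R]

instance : Zero (W2 R) := ⟨((0, 0) : R × R)⟩

instance : Add (W2 R) := ⟨fun x y => ((x.1 + y.1, x.2 + y.2 + x.1 * y.1) : R × R)⟩

instance [CharP R 2] : Neg (W2 R) := ⟨fun x => ((x.1, x.2 + x.1 * x.1) : R × R)⟩

theorem fst_add (x y : W2 R) : (x + y).1 = x.1 + y.1 := rfl
theorem snd_add (x y : W2 R) : (x + y).2 = x.2 + y.2 + x.1 * y.1 := rfl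
theorem fst_zero : (0 : W2 R).1 = 0 := rfl
theorem snd_zero : (0 : W2 R).2 = 0 := rfl
theorem fst_neg [CharP R 2] (x : W2 R) : (-x).1 = x.1 := rfl
theorem snd_neg [CharP R 2] (x : W2 R) : (-x).2 = x.2 + x.1 * x.1 := rfl

instance [CharP R 2] : AddCommGroup (W2 R) where
  add := (· + ·)
  zero := 0
  neg := Neg.neg
  add_assoc a b c := Prod.ext_iff.mpr (by
    constructor <;> simp only [fst_add, snd_add] <;> ring)
  zero_add a := Prod.ext_iff.mpr (by
    constructor <;> simp [fst_add, snd_add, fst_zero, snd_zero])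
  add_zero a := Prod.ext_iff.mpr (by
    constructor <;> simp [fst_add, snd_add, fst_zero, snd_zero])
  add_comm a b := Prod.ext_iff.mpr (by
    constructor <;> simp only [fst_add, snd_add] <;> ring)
  neg_add_cancel a := Prod.ext_iff.mpr (by
    constructor
    · simp only [fst_add, fst_neg, fst_zero]
      exact CharTwo.add_self_eq_zero a.1
    · simp only [snd_add, snd_neg, snd_zero, fst_neg]
      rw [show a.2 + a.1 * a.1 + a.2 + a.1 * a.1
            = (a.2 + a.2) + (a.1 * a.1 + a.1 * a.1) by ring]
      rw [CharTwo.add_self_eq_zero, CharTwo.add_self_eq_zero, add_zero])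
  nsmul := nsmulRec
  zsmul := zsmulRec

/-- Frobenius on length-two Witt vectors (characteristic two). -/
def frob (x : W2 R) : W2 R := ((x.1 ^ 2, x.2 ^ 2) : R × R)

/-- The Witt-vector trace `Tr_{q/2} = ∑_{i=0}^{n-1} Frobⁱ`. -/
def tr [CharP R 2] (n : ℕ) (x : W2 R) : W2 R := ∑ i ∈ Finset.range n, frob^[i] x

/-- The additive character of `W₂(𝔽₂)` determined by `ξ₂(1,0) = I`
(for `I` a fixed primitive fourth root of unity), evaluated on Witt vectors
whose components lie in the prime field `𝔽₂ = {0,1}`. -/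
def xi (I : ℂ) (x : W2 R) : ℂ := (if x.1 = 0 then 1 else I) * (if x.2 = 0 then 1 else -1)

end W2

variable {K : Type*}

/-- The absolute trace `Tr_{q/2} : 𝔽_q → 𝔽₂`, computed inside `K` (here `q = 2^n`). -/
def tr2 [Field K] (n : ℕ) (x : K) : K := ∑ i ∈ Finset.range n, x ^ 2 ^ i

/-- The relative trace `Tr_{q/p} : 𝔽_q → 𝔽_p ⊆ 𝔽_q`, computed inside `K`
(here `q = p^m`). -/
def trp [Field K] (p m : ℕ) (x : K) : K := ∑ i ∈ Finset.range m, x ^ p ^ i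

/-- The character `ψ_q(x) = (-1)^{Tr_{q/2}(x)}`. -/
def psiq [Field K] (n : ℕ) (x : K) : ℂ := if tr2 n x = 0 then 1 else -1

/-- The map `Q_q(x) = ξ₂(Tr_{q/2}(x,0))` on Witt vectors of length two. -/
def Qq [Field K] [CharP K 2] (I : ℂ) (n : ℕ) (x : K) : ℂ :=
  W2.xi I (W2.tr n (((x, 0) : K × K) : W2 K))

/-- The unique `2^j`-th root in a perfect field of characteristic two. -/
def rt (L : Type*) [Field L] [ExpChar L 2] [PerfectRing L 2] (j : ℕ) (x : L) : L :=
  (fun y => (frobeniusEquiv L 2).symm y)^[j] x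

/-- Evaluation of the `𝔽_p`-linearised polynomial `∑_{i=0}^{e} c_i x^{p^i}`. -/
def Lpoly [Field K] (p e : ℕ) (c : ℕ → K) (x : K) : K :=
  ∑ i ∈ Finset.range (e + 1), c i * x ^ p ^ i

/-- The adjoint `f^*(x) = ∑_{i=0}^{e} (c_i x)^{p^{-i}}` (with `p = 2^k`). -/
def adj [Field K] [ExpChar K 2] [PerfectRing K 2] (k e : ℕ) (c : ℕ → K) (x : K) : K :=
  ∑ i ∈ Finset.range (e + 1), rt K (k * i) (c i * x)

/-- Evaluation of the `𝔽_p`-linearised polynomial `∑_{i=1}^{e} c_i x^{p^i}`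
(no constant-in-`x` coefficient). -/
def LpolyIcc [Field K] (p e : ℕ) (c : ℕ → K) (x : K) : K :=
  ∑ i ∈ Finset.Icc 1 e, c i * x ^ p ^ i

/-- The adjoint `R^*(x) = ∑_{i=1}^{e} (c_i x)^{p^{-i}}` (with `p = 2^k`). -/
def adjIcc [Field K] [ExpChar K 2] [PerfectRing K 2] (k e : ℕ) (c : ℕ → K) (x : K) : K :=
  ∑ i ∈ Finset.Icc 1 e, rt K (k * i) (c i * x)

/-- The coefficients `a_i = ∑_{j=0}^{e-i} (b_j b_{j+i})^{p^{-j}}` of `R_F` (with `p = 2^k`). -/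
def aRF [Field K] [ExpChar K 2] [PerfectRing K 2] (k e : ℕ) (b : ℕ → K) (i : ℕ) : K :=
  ∑ j ∈ Finset.range (e - i + 1), rt K (k * j) (b j * b (j + i))

/-- The linearised polynomial `R_F(x) = ∑_{i=1}^{e} a_i x^{p^i}` (with `p = 2^k`). -/
def RF [Field K] [ExpChar K 2] [PerfectRing K 2] (k e : ℕ) (b : ℕ → K) (x : K) : K :=
  ∑ i ∈ Finset.Icc 1 e, aRF k e b i * x ^ (2 ^ k) ^ i

/-- `γ_F = ∑_{0 ≤ i < j ≤ e} b_i^{p^{-i}} b_j^{p^{-j}}` (with `p = 2^k`). -/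
def gammaF [Field K] [ExpChar K 2] [PerfectRing K 2] (k e : ℕ) (b : ℕ → K) : K :=
  ∑ i ∈ Finset.range (e + 1), ∑ j ∈ Finset.Ioo i (e + 1), rt K (k * i) (b i) * rt K (k * j) (b j)

/-- `α_F(t) = γ_F + F^*(t)²`. -/
def alphaF [Field K] [ExpChar K 2] [PerfectRing K 2] (k e : ℕ) (b : ℕ → K) (t : K) : K :=
  gammaF k e b + adj k e b t ^ 2

/-- `R_{F,t}(x) = R_F(x) + α_F(t) x`. -/
def RFt [Field K] [ExpChar K 2] [PerfectRing K 2] (k e : ℕ) (b : ℕ → K) (t x : K) : K :=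
  RF k e b x + alphaF k e b t * x

/-- The number of affine points of the van der Geer–van der Vlugt curve
`y^p - y = x R(x)` with coordinates in `K`. -/
def Ncount (K : Type*) [Field K] (p : ℕ) (R : K → K) : ℕ :=
  Nat.card {z : K × K // z.2 ^ p - z.2 = z.1 * R z.1}

/-- The adjoint `F^*` of `F(x) = ∑_{i=0}^{e} b_i x^{p^i}`, with coefficients `b_i ∈ K`,
viewed as a function on the algebraic closure `𝔽` of `K`. -/
def adjBar [Field K] [CharP K 2] (k e : ℕ) (b : ℕ → K) (x : AlgebraicClosure K) : AlgebraicClosure K :=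
  adj k e (fun i => algebraMap K (AlgebraicClosure K) (b i)) x

/-- `F(x) = ∑_{i=0}^{e} b_i x^{p^i}`, with coefficients `b_i ∈ K`, viewed as a function on
the algebraic closure `𝔽` of `K` (with `p = 2^k`). -/
def LpolyBar [Field K] [CharP K 2] (k e : ℕ) (b : ℕ → K) (x : AlgebraicClosure K) : AlgebraicClosure K :=
  Lpoly (2 ^ k) e (fun i => algebraMap K (AlgebraicClosure K) (b i)) x


/-!
Write `q = 2 ^ k`, let `K` have `q ^ t` elements and put `Q(x) = Tr_{K/𝔽_q}(x R(x))`. By additive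
Hilbert 90, `y ^ q + y = c` has `q` solutions in `K` when `Tr c = 0` and none otherwise, so the
curve has `N = q · #{Q = 0}` affine points.

For `t = 2m` the form factors as `Q(x) = T(x) · T(x) ^ q`, where `T` is the trace to `𝔽_{q²}`.
Hence `Q(x) = 0` exactly on the kernel of `T`, which has `q ^ (2m - 2)` elements, and
`N = q ^ (2m - 1)`.

For `t < 2m`, fix `z₀` with `ψ_q(z₀) = -1`. The character sum `S = ∑ ψ_q(z₀ Q(x))` satisfies
`N - q ^ t = (q - 1) S` and `S² = q ^ t ∑_{d ∈ W} ψ_q(z₀ Q(d))`, where `W` is the radical of the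
polar form of `Q`; the last sum is `0` or `|W|`, so extremality would force `|W| = q ^ (2m - 2)`.
But `|W| ≤ q ^ t`, and when `t ≥ 2m - 2` the radical lies in the kernel of `R + R*` (`R*` the
adjoint of `R` for the trace form), a linearized polynomial whose exponents `q ^ j` all have
`1 ≤ j ≤ 2m - 2`, so that `|W| ≤ q ^ (2m - 3)`.
-/

open Function Polynomial

theorem Function.Periodic.sum_range_add {M : Type*} [AddCommMonoid M] {h : ℕ → M} {n : ℕ}
    (hh : Periodic h n) (c : ℕ) : ∑ a ∈ range n, h (c + a) = ∑ a ∈ range n, h a := by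
  have hIco : ∑ a ∈ range n, h (c + a) = ∑ j ∈ Ico c (c + n), h j := by
    rw [Finset.sum_Ico_eq_sum_range, Nat.add_sub_cancel_left]
  rw [hIco, Finset.sum_eq_multiset_sum, Finset.sum_eq_multiset_sum,
    ← Multiset.map_congr rfl fun j _ => hh.map_mod_nat j, Finset.range_val,
    ← Nat.multiset_Ico_map_mod c n, Multiset.map_map]
  rfl

theorem Finset.sum_range_two_mul {M : Type*} [AddCommMonoid M] (f : ℕ → M) (n : ℕ) :
    ∑ l ∈ range (2 * n), f l = ∑ a ∈ range n, f (2 * a) + ∑ a ∈ range n, f (2 * a + 1) := by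
  induction n with
  | zero => simp
  | succ n ih =>
    rw [show 2 * (n + 1) = 2 * n + 1 + 1 by ring, sum_range_succ, sum_range_succ, ih,
      sum_range_succ, sum_range_succ]
    abel

theorem Finset.sum_Icc_one_eq_sum_range {M : Type*} [AddCommMonoid M] (f : ℕ → M) (n : ℕ) :
    ∑ i ∈ Icc 1 n, f i = ∑ i ∈ range n, f (i + 1) := by
  induction n with
  | zero => simp
  | succ n ih => rw [sum_Icc_succ_top (by omega), ih, sum_range_succ]

-- Both sides are the sum of `g i * g j` over the unordered pairs `{i, j}` of residues mod `4M`
-- with odd difference.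
theorem Function.Periodic.sum_sum_mul_add_odd_eq {R : Type*} [CommSemiring R] {g : ℕ → R} {M : ℕ}
    (hg : Periodic g (4 * M)) :
    ∑ l ∈ range (4 * M), ∑ b ∈ range M, g l * g (l + (2 * b + 1))
      = (∑ a ∈ range (2 * M), g (2 * a)) * ∑ a ∈ range (2 * M), g (2 * a + 1) := by
  have hodd : Periodic (fun c => g (2 * c + 1)) (2 * M) := fun c => by
    simp only [show 2 * (c + 2 * M) + 1 = 2 * c + 1 + 4 * M by ring, hg _]
  have hsplit : ∀ a, ∑ c ∈ range (2 * M), g (2 * c + 1) = ∑ c ∈ range M, g (2 * a + (2 * c + 1))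
      + ∑ c ∈ range M, g (2 * a + (2 * M + 2 * c + 1)) := fun a => by
    rw [← hodd.sum_range_add a, two_mul M, Finset.sum_range_add]
    congr 1 <;> refine sum_congr rfl fun c _ => congrArg g (by ring)
  have hcross : ∑ a ∈ range (2 * M), ∑ b ∈ range M, g (2 * a + 1) * g (2 * a + 1 + (2 * b + 1))
      = ∑ a ∈ range (2 * M), ∑ c ∈ range M, g (2 * a) * g (2 * a + (2 * M + 2 * c + 1)) := by
    rw [sum_comm, sum_comm (s := range (2 * M))]
    conv_rhs => rw [← sum_range_reflect _ M]
    refine sum_congr rfl fun b hb => ?_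
    have hb : b < M := mem_range.mp hb
    have hper : Periodic (fun a => g (2 * a) * g (2 * a + (2 * M + 2 * (M - 1 - b) + 1))) (2 * M) :=
      fun a => by
        simp only [show 2 * (a + 2 * M) = 2 * a + 4 * M by ring,
          show 2 * a + 4 * M + (2 * M + 2 * (M - 1 - b) + 1)
            = 2 * a + (2 * M + 2 * (M - 1 - b) + 1) + 4 * M by ring, hg _]
    rw [← hper.sum_range_add (b + 1)]
    refine sum_congr rfl fun a _ => ?_
    rw [mul_comm (g _),
      show 2 * (b + 1 + a) + (2 * M + 2 * (M - 1 - b) + 1) = 2 * a + 1 + 4 * M by omega, hg,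
      show 2 * (b + 1 + a) = 2 * a + 1 + (2 * b + 1) by ring]
  rw [show 4 * M = 2 * (2 * M) by ring, sum_range_two_mul, hcross, sum_mul, ← sum_add_distrib]
  refine sum_congr rfl fun a _ => ?_
  rw [hsplit a, mul_add, mul_sum, mul_sum]

theorem Finset.sum_eq_zero_of_add_mem_of_eq_neg {G R : Type*} [AddGroup G] [Ring R]
    [NoZeroDivisors R] [CharZero R] {s : Finset G} {χ : G → R} (d : G)
    (hs : ∀ x, x + d ∈ s ↔ x ∈ s) (hχ : ∀ x ∈ s, χ (x + d) = -χ x) : ∑ x ∈ s, χ x = 0 := by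
  have hshift : ∑ x ∈ s, χ (x + d) = ∑ x ∈ s, χ x :=
    sum_equiv (Equiv.addRight d) (fun x => (hs x).symm) fun _ _ => rfl
  rw [sum_congr rfl hχ, sum_neg_distrib, eq_comm] at hshift
  exact CharZero.eq_neg_self_iff.mp hshift

theorem CharTwo.sum_add_sum_eq_sum_symmDiff {ι R : Type*} [DecidableEq ι] [Ring R] [CharP R 2]
    (s t : Finset ι) (f : ι → R) : ∑ i ∈ s, f i + ∑ i ∈ t, f i = ∑ i ∈ symmDiff s t, f i := by
  rw [symmDiff_def, sup_eq_union, sum_union disjoint_sdiff_sdiff, ← sum_inter_add_sum_sdiff s t,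
    ← sum_inter_add_sum_sdiff t s, inter_comm t s]
  rw [add_add_add_comm, CharTwo.add_self_eq_zero, zero_add]

theorem pow_pow_pow_eq_pow_pow_add {M : Type*} [Monoid M] (x : M) (q i j : ℕ) :
    (x ^ q ^ i) ^ q ^ j = x ^ q ^ (i + j) := by
  rw [pow_add, pow_mul]

theorem pow_pow_eq_self_of_pow_eq_self {M : Type*} [Monoid M] {μ : M} {q : ℕ} (hμ : μ ^ q = μ)
    (i : ℕ) : μ ^ q ^ i = μ := by
  induction i with
  | zero => simp
  | succ i ih => rw [pow_succ, pow_mul, ih, hμ]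

theorem card_sum_pow_eq_zero_le {K ι : Type*} [Field K] [Fintype K] {s : Finset ι} {e : ι → ℕ}
    (he : Set.InjOn e s) (hs : s.Nonempty) {D : ℕ} (hD : ∀ i ∈ s, e i ≤ D) :
    Nat.card {x : K // ∑ i ∈ s, x ^ e i = 0} ≤ D := by
  set P : K[X] := ∑ i ∈ s, X ^ e i
  obtain ⟨i₀, hi₀⟩ := hs
  have hP : P ≠ 0 := fun h => by
    have hcoeff : P.coeff (e i₀) = 1 := by
      rw [finsetSum_coeff, sum_eq_single i₀ (fun j hj hji => by
        rw [coeff_X_pow, if_neg (he.ne hi₀ hj hji.symm)]) (absurd hi₀), coeff_X_pow_self]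
    simp [h] at hcoeff
  rw [Nat.card_eq_fintype_card, Fintype.card_subtype]
  calc #{x : K | ∑ i ∈ s, x ^ e i = 0} ≤ P.natDegree :=
        card_le_degree_of_subset_roots fun x hx => by
          simpa [mem_roots hP, P, eval_finsetSum] using hx
    _ ≤ D := natDegree_sum_le_of_forall_le _ _ fun i hi => (natDegree_X_pow_le _).trans (hD i hi)

theorem AddMonoidHom.card_ker {G H : Type*} [AddGroup G] [AddGroup H] (f : G →+ H) :
    Nat.card f.ker = Nat.card {x : G // f x = 0} :=
  Nat.card_congr (Equiv.subtypeEquivRight fun _ => f.mem_ker)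

theorem AddMonoidHom.card_ker_eq_and_range_eq_ker {G H L : Type*} [AddGroup G] [Finite G]
    [AddGroup H] [Finite H] [AddGroup L] (f : G →+ H) (g : H →+ L) (hgf : ∀ x, g (f x) = 0)
    {A B : ℕ} (hA : Nat.card f.ker ≤ A) (hB : Nat.card g.ker ≤ B) (hG : Nat.card G = A * B) :
    Nat.card f.ker = A ∧ Nat.card g.ker = B ∧ f.range = g.ker := by
  have hle : f.range ≤ g.ker := by rintro _ ⟨x, rfl⟩; exact hgf x
  have hmul : Nat.card f.ker * Nat.card f.range = Nat.card G := by
    rw [← AddSubgroup.index_ker, AddSubgroup.card_mul_index]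
  have hrange := (AddSubgroup.card_le_of_le hle).trans hB
  have hker_pos : 0 < Nat.card f.ker := Nat.card_pos
  have hrange_pos : 0 < Nat.card f.range := Nat.card_pos
  obtain ⟨hkerA, hrangeB⟩ : Nat.card f.ker = A ∧ Nat.card f.range = B := by
    constructor <;> nlinarith
  exact ⟨hkerA, le_antisymm hB (hrangeB ▸ AddSubgroup.card_le_of_le hle),
    AddSubgroup.eq_of_le_of_card_ge hle (by omega)⟩

theorem periodic_pow_pow {K : Type*} [Field K] [Fintype K] {q t : ℕ}
    (hcard : Fintype.card K = q ^ t) (x : K) : Periodic (fun j => x ^ q ^ j) t := fun j => by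
  simp only [pow_add q, pow_mul, ← hcard, FiniteField.pow_card]

theorem trp_pow_pow {K : Type*} [Field K] [Fintype K] {q t : ℕ} (hcard : Fintype.card K = q ^ t)
    (x : K) (i : ℕ) : trp q t (x ^ q ^ i) = trp q t x := by
  simp only [trp, pow_pow_pow_eq_pow_pow_add]
  exact (periodic_pow_pow hcard x).sum_range_add i

theorem trp_mul_pow_pow {K : Type*} [Field K] [Fintype K] {q t : ℕ}
    (hcard : Fintype.card K = q ^ t) {j : ℕ} (hj : j ≤ t) (a b : K) :
    trp q t (a * b ^ q ^ j) = trp q t (a ^ q ^ (t - j) * b) := by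
  rw [← trp_pow_pow hcard _ (t - j), mul_pow, pow_pow_pow_eq_pow_pow_add, Nat.add_sub_cancel' hj,
    ← hcard, FiniteField.pow_card]

theorem psiq_zero {K : Type*} [Field K] (n : ℕ) : psiq n (0 : K) = 1 := by
  simp [psiq, tr2]

theorem psiq_eq_neg_one_of_ne_one {K : Type*} [Field K] {n : ℕ} {x : K} (h : psiq n x ≠ 1) :
    psiq n x = -1 := by
  unfold psiq at h ⊢
  split_ifs at h ⊢ <;> simp_all

section CharTwo

variable [Field K] [CharP K 2] {k t : ℕ}

theorem pow_two_pow_pow_eq_iterateFrobenius (x : K) (i : ℕ) :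
    x ^ (2 ^ k) ^ i = iterateFrobenius K 2 (k * i) x := by
  rw [iterateFrobenius_def, pow_mul]

def frobSum (k : ℕ) (s : Finset ℕ) : K →+ K where
  toFun x := ∑ j ∈ s, x ^ (2 ^ k) ^ j
  map_zero' := sum_eq_zero fun j _ => zero_pow (by positivity)
  map_add' x y := by
    simp only [pow_two_pow_pow_eq_iterateFrobenius, map_add, sum_add_distrib]

theorem frobSum_apply (s : Finset ℕ) (x : K) : frobSum k s x = ∑ j ∈ s, x ^ (2 ^ k) ^ j := rfl

theorem frobSum_mul_left (s : Finset ℕ) {μ : K} (hμ : μ ^ 2 ^ k = μ) (x : K) :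
    frobSum k s (μ * x) = μ * frobSum k s x := by
  simp only [frobSum_apply, mul_sum, mul_pow, pow_pow_eq_self_of_pow_eq_self hμ]

theorem frobSum_pow_two_pow_pow (s : Finset ℕ) (x : K) (i : ℕ) :
    frobSum k s x ^ (2 ^ k) ^ i = frobSum k s (x ^ (2 ^ k) ^ i) := by
  simp only [frobSum_apply, pow_two_pow_pow_eq_iterateFrobenius, map_sum]
  refine sum_congr rfl fun j _ => ?_
  simp only [← pow_two_pow_pow_eq_iterateFrobenius, pow_pow_pow_eq_pow_pow_add, add_comm]

theorem trp_eq_frobSum (x : K) : trp (2 ^ k) t x = frobSum k (range t) x := rfl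

theorem trp_add (x y : K) : trp (2 ^ k) t (x + y) = trp (2 ^ k) t x + trp (2 ^ k) t y :=
  map_add (frobSum k (range t)) x y

theorem trp_sum {ι : Type*} (s : Finset ι) (f : ι → K) :
    trp (2 ^ k) t (∑ i ∈ s, f i) = ∑ i ∈ s, trp (2 ^ k) t (f i) :=
  map_sum (frobSum k (range t)) f s

theorem trp_mul_left {μ : K} (hμ : μ ^ 2 ^ k = μ) (x : K) :
    trp (2 ^ k) t (μ * x) = μ * trp (2 ^ k) t x :=
  frobSum_mul_left (range t) hμ x

def artinSchreier (k : ℕ) : K →+ K where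
  toFun y := y ^ 2 ^ k + y
  map_zero' := by simp
  map_add' x y := by rw [add_pow_char_pow]; ring

theorem artinSchreier_apply (y : K) : artinSchreier k y = y ^ 2 ^ k + y := rfl

theorem trp_two_eq_artinSchreier (y : K) : trp (2 ^ k) 2 y = artinSchreier k y := by
  simp [trp, sum_range_succ, artinSchreier_apply, add_comm]

def quadForm (k t : ℕ) (R : K → K) (x : K) : K := trp (2 ^ k) t (x * R x)

def polar (k t : ℕ) (R : K → K) (x d : K) : K := trp (2 ^ k) t (x * R d + d * R x)

section

variable (R : K →+ K)

theorem quadForm_add (x d : K) :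
    quadForm k t R (x + d) = quadForm k t R x + quadForm k t R d + polar k t R x d := by
  simp only [quadForm, polar, ← trp_add, map_add]
  ring_nf

theorem polar_add_left (x x' d : K) :
    polar k t R (x + x') d = polar k t R x d + polar k t R x' d := by
  simp only [polar, ← trp_add, map_add]
  ring_nf

theorem polar_add_right (x d d' : K) :
    polar k t R x (d + d') = polar k t R x d + polar k t R x d' := by
  simp only [polar, ← trp_add, map_add]
  ring_nf

variable {R}

theorem quadForm_mul (hR : ∀ μ x, μ ^ 2 ^ k = μ → R (μ * x) = μ * R x) {ν : K}
    (hν : ν ^ 2 ^ k = ν) (x : K) : quadForm k t R (ν * x) = ν ^ 2 * quadForm k t R x := by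
  rw [quadForm, hR ν x hν, show ν * x * (ν * R x) = ν ^ 2 * (x * R x) by ring]
  exact trp_mul_left (by rw [← pow_mul, mul_comm, pow_mul, hν]) _

theorem polar_mul_left (hR : ∀ μ x, μ ^ 2 ^ k = μ → R (μ * x) = μ * R x) {μ : K}
    (hμ : μ ^ 2 ^ k = μ) (x d : K) : polar k t R (μ * x) d = μ * polar k t R x d := by
  rw [polar, hR μ x hμ, show μ * x * R d + d * (μ * R x) = μ * (x * R d + d * R x) by ring]
  exact trp_mul_left hμ _

end

end CharTwo

section FiniteCharTwo

variable [Field K] [Fintype K] [CharP K 2] {k t : ℕ}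

theorem trp_pow_two_pow (hcard : Fintype.card K = (2 ^ k) ^ t) (x : K) :
    trp (2 ^ k) t x ^ 2 ^ k = trp (2 ^ k) t x := by
  have h := frobSum_pow_two_pow_pow (k := k) (range t) x 1
  rw [pow_one] at h
  rw [trp_eq_frobSum, h, ← trp_eq_frobSum, ← trp_eq_frobSum]
  simpa using trp_pow_pow hcard x 1

theorem card_frobSum_eq_zero_le (hk : 0 < k) {s : Finset ℕ} (hs : s.Nonempty) {c D : ℕ}
    (hsD : ∀ j ∈ s, c ≤ j ∧ j ≤ c + D) : Nat.card {x : K // frobSum k s x = 0} ≤ (2 ^ k) ^ D := by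
  have hq : 2 ≤ 2 ^ k := Nat.le_self_pow hk.ne' 2
  -- Composing with the bijection `x ↦ x ^ q ^ c` lowers every exponent by `c`.
  let φ : K ≃ K := Equiv.ofBijective _ (iterateFrobenius K 2 (k * c)).injective.bijective_of_finite
  have hφ : ∀ x, frobSum k s x = ∑ j ∈ s, φ x ^ (2 ^ k) ^ (j - c) := fun x => by
    refine sum_congr rfl fun j hj => ?_
    rw [Equiv.ofBijective_apply, ← pow_two_pow_pow_eq_iterateFrobenius,
      pow_pow_pow_eq_pow_pow_add, Nat.add_sub_cancel' (hsD j hj).1]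
  rw [Nat.card_congr (φ.subtypeEquiv (p := fun x => frobSum k s x = 0)
    (q := fun y => ∑ j ∈ s, y ^ (2 ^ k) ^ (j - c) = 0) fun x => by rw [hφ])]
  refine card_sum_pow_eq_zero_le (fun i hi j hj hij => ?_) hs fun j hj =>
    Nat.pow_le_pow_right (by omega) (by have := hsD j hj; omega)
  have := Nat.pow_right_injective hq hij
  have := hsD i hi; have := hsD j hj
  omega

theorem card_trp_eq_zero_le (hk : 0 < k) (ht : 0 < t) :
    Nat.card {x : K // trp (2 ^ k) t x = 0} ≤ (2 ^ k) ^ (t - 1) :=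
  card_frobSum_eq_zero_le hk (nonempty_range_iff.mpr ht.ne') (c := 0) fun j hj => by
    simp only [mem_range] at hj; omega

-- Additive Hilbert 90 by counting: `|ker ℘| ≤ q` and `|ker Tr| ≤ q ^ (t - 1)` by degree, while
-- `Tr ∘ ℘ = 0` and the two bounds multiply to `|K|`.
theorem artinSchreier_card_ker_and_range (hk : 0 < k) (ht : 0 < t)
    (hcard : Fintype.card K = (2 ^ k) ^ t) :
    Nat.card (artinSchreier (K := K) k).ker = 2 ^ k ∧
      Nat.card (frobSum (K := K) k (range t)).ker = (2 ^ k) ^ (t - 1) ∧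
      (artinSchreier (K := K) k).range = (frobSum k (range t)).ker := by
  refine AddMonoidHom.card_ker_eq_and_range_eq_ker _ _ (fun y => ?_) ?_ ?_ ?_
  · have hfrob := trp_pow_pow hcard y 1
    rw [pow_one] at hfrob
    rw [artinSchreier_apply, map_add, ← trp_eq_frobSum, ← trp_eq_frobSum, hfrob,
      CharTwo.add_self_eq_zero]
  · rw [AddMonoidHom.card_ker, ← Nat.card_congr (Equiv.subtypeEquivRight
      (p := fun y : K => trp (2 ^ k) 2 y = 0) fun y => by rw [trp_two_eq_artinSchreier])]
    simpa using card_trp_eq_zero_le (K := K) hk two_pos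
  · rw [AddMonoidHom.card_ker]; exact card_trp_eq_zero_le hk ht
  · rw [Nat.card_eq_fintype_card, hcard, ← pow_succ', Nat.sub_add_cancel ht]

theorem trp_eq_zero_iff (hk : 0 < k) (ht : 0 < t) (hcard : Fintype.card K = (2 ^ k) ^ t) (c : K) :
    trp (2 ^ k) t c = 0 ↔ ∃ y, y ^ 2 ^ k + y = c := by
  rw [trp_eq_frobSum, ← AddMonoidHom.mem_ker, ← (artinSchreier_card_ker_and_range hk ht hcard).2.2]
  rfl

theorem card_trp_eq_zero (hk : 0 < k) (ht : 0 < t) (hcard : Fintype.card K = (2 ^ k) ^ t) :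
    Nat.card {x : K // trp (2 ^ k) t x = 0} = (2 ^ k) ^ (t - 1) := by
  rw [← (artinSchreier_card_ker_and_range hk ht hcard).2.1, AddMonoidHom.card_ker]
  rfl

theorem exists_trp_ne_zero (hk : 0 < k) (ht : 0 < t) (hcard : Fintype.card K = (2 ^ k) ^ t) :
    ∃ z : K, trp (2 ^ k) t z ≠ 0 := by
  by_contra! h
  have hcount := card_trp_eq_zero hk ht hcard
  rw [Nat.card_congr (Equiv.subtypeUnivEquiv h), Nat.card_eq_fintype_card, hcard] at hcount
  exact (Nat.pow_lt_pow_right (Nat.le_self_pow hk.ne' 2) (Nat.sub_one_lt ht.ne')).ne' hcount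

theorem card_curve (hk : 0 < k) (ht : 0 < t) (hcard : Fintype.card K = (2 ^ k) ^ t) (f : K → K) :
    Nat.card {z : K × K // z.2 ^ 2 ^ k + z.2 = f z.1}
      = 2 ^ k * Nat.card {x : K // trp (2 ^ k) t (f x) = 0} := by
  have hfiber : ∀ x, Nat.card {y : K // y ^ 2 ^ k + y = f x}
      = if trp (2 ^ k) t (f x) = 0 then 2 ^ k else 0 := fun x => by
    split_ifs with h
    · obtain ⟨y₀, hy₀⟩ := (trp_eq_zero_iff hk ht hcard _).mp h
      refine (Nat.card_congr (Equiv.subtypeEquiv (Equiv.addRight y₀) fun y => ?_)).trans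
        ((AddMonoidHom.card_ker _).symm.trans (artinSchreier_card_ker_and_range hk ht hcard).1)
      rw [Equiv.coe_addRight, map_add, artinSchreier_apply y₀, hy₀, CharTwo.add_eq_zero,
        artinSchreier_apply]
    · exact Nat.card_eq_zero.mpr
        (Or.inl ⟨fun ⟨y, hy⟩ => h ((trp_eq_zero_iff hk ht hcard _).mpr ⟨y, hy⟩)⟩)
  rw [Nat.card_congr (Equiv.subtypeProdEquivSigmaSubtype fun x y => y ^ 2 ^ k + y = f x),
    Nat.card_sigma, sum_congr rfl fun x _ => hfiber x, sum_ite, sum_const_zero, add_zero,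
    sum_const, smul_eq_mul, mul_comm, Nat.card_eq_fintype_card, Fintype.card_subtype]

-- `{μ | μ ^ q = μ}` is the subfield `𝔽_q` of `K`.
theorem card_filter_pow_two_pow_eq_self (hk : 0 < k) (ht : 0 < t)
    (hcard : Fintype.card K = (2 ^ k) ^ t) :
    #{μ : K | μ ^ 2 ^ k = μ} = 2 ^ k := by
  refine Eq.trans ?_ (artinSchreier_card_ker_and_range hk ht hcard).1
  rw [AddMonoidHom.card_ker, Nat.card_eq_fintype_card, Fintype.card_subtype]
  simp only [artinSchreier_apply, CharTwo.add_eq_zero]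

theorem tr2_eq_zero_or_eq_one {n : ℕ} (hcard : Fintype.card K = 2 ^ n) (x : K) :
    tr2 n x = 0 ∨ tr2 n x = 1 := by
  have hidem : tr2 n x ^ 2 = tr2 n x := by
    have h := trp_pow_two_pow (K := K) (k := 1) (t := n) (by rwa [pow_one]) x
    rw [pow_one] at h
    exact h
  rcases mul_eq_zero.mp (show tr2 n x * (tr2 n x - 1) = 0 by linear_combination hidem) with h | h
  · exact .inl h
  · exact .inr (sub_eq_zero.mp h)

theorem psiq_add {n : ℕ} (hcard : Fintype.card K = 2 ^ n) (x y : K) :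
    psiq n (x + y) = psiq n x * psiq n y := by
  have hadd : tr2 n (x + y) = tr2 n x + tr2 n y := by
    simp only [tr2, add_pow_char_pow, sum_add_distrib]
  simp only [psiq, hadd]
  rcases tr2_eq_zero_or_eq_one hcard x with hx | hx <;>
    rcases tr2_eq_zero_or_eq_one hcard y with hy | hy <;>
    simp [hx, hy, CharTwo.add_self_eq_zero]

theorem exists_psiq_eq_neg_one {n : ℕ} (hn : 0 < n) (hcard : Fintype.card K = 2 ^ n) :
    ∃ z : K, psiq n z = -1 := by
  obtain ⟨z, hz⟩ := exists_trp_ne_zero (k := 1) one_pos hn (by rwa [pow_one])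
  rw [pow_one] at hz
  exact ⟨z, if_neg hz⟩

def radical (k t : ℕ) (R : K → K) : Finset K := univ.filter fun d => ∀ x, polar k t R x d = 0

section

variable {R : K →+ K} {z₀ : K}

theorem sum_fixed_psiq_mul (hk : 0 < k) (ht : 0 < t) (hcard : Fintype.card K = (2 ^ k) ^ t)
    (hz₀ : psiq (k * t) z₀ = -1) {c : K} (hc : c ^ 2 ^ k = c) :
    ∑ μ ∈ univ.filter (fun μ : K => μ ^ 2 ^ k = μ), psiq (k * t) (z₀ * μ * c)
      = if c = 0 then (2 ^ k : ℂ) else 0 := by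
  have hcard' : Fintype.card K = 2 ^ (k * t) := by rw [hcard, pow_mul]
  split_ifs with h0
  · simp [h0, psiq_zero, card_filter_pow_two_pow_eq_self hk ht hcard]
  refine sum_eq_zero_of_add_mem_of_eq_neg c⁻¹ (fun μ => ?_) fun μ _ => ?_
  · simp only [mem_filter, mem_univ, true_and, add_pow_char_pow, inv_pow, hc, add_left_inj]
  · rw [show z₀ * (μ + c⁻¹) * c = z₀ * μ * c + z₀ by field_simp, psiq_add hcard', hz₀, mul_neg_one]

theorem two_pow_mul_card_quadForm_eq_zero (hk : 0 < k) (ht : 0 < t)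
    (hcard : Fintype.card K = (2 ^ k) ^ t) (hR : ∀ μ x, μ ^ 2 ^ k = μ → R (μ * x) = μ * R x)
    (hz₀ : psiq (k * t) z₀ = -1) :
    (2 ^ k : ℂ) * Nat.card {x : K // quadForm k t R x = 0}
      = (2 ^ k) ^ t + (2 ^ k - 1) * ∑ x, psiq (k * t) (z₀ * quadForm k t R x) := by
  set T := univ.filter fun μ : K => μ ^ 2 ^ k = μ
  have h0T : (0 : K) ∈ T := by simp [T]
  have hcount : ∑ x, ∑ μ ∈ T, psiq (k * t) (z₀ * μ * quadForm k t R x)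
      = (2 ^ k : ℂ) * Nat.card {x : K // quadForm k t R x = 0} := by
    rw [sum_congr rfl fun x _ =>
      sum_fixed_psiq_mul (c := quadForm k t R x) hk ht hcard hz₀ (trp_pow_two_pow hcard _),
      sum_ite, sum_const_zero, add_zero, sum_const, nsmul_eq_mul, mul_comm,
      Nat.card_eq_fintype_card, Fintype.card_subtype]
  have hsquare : ∀ μ ∈ T.erase 0, ∑ x, psiq (k * t) (z₀ * μ * quadForm k t R x)
      = ∑ x, psiq (k * t) (z₀ * quadForm k t R x) := fun μ hμ => by
    obtain ⟨hμ0, hμT⟩ := mem_erase.mp hμ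
    have hμ : μ ^ 2 ^ k = μ := (mem_filter.mp hμT).2
    -- `μ = ν²` with `ν ∈ 𝔽_q`, and `Q(νx) = ν² Q(x)`.
    obtain ⟨ν, rfl⟩ : ∃ ν, μ = ν ^ 2 := by
      obtain ⟨r, hr⟩ := FiniteField.isSquare_of_char_two (ringChar.eq K 2) μ
      exact ⟨r, by rw [hr, sq]⟩
    have hν : ν ^ 2 ^ k = ν := frobenius_inj K 2 <| by
      rw [frobenius_def, frobenius_def, ← hμ]
      ring
    have hν0 : ν ≠ 0 := by rintro rfl; simp at hμ0
    refine Fintype.sum_equiv (Equiv.mulLeft₀ ν hν0) _ _ fun x => ?_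
    change _ = psiq (k * t) (z₀ * quadForm k t R (ν * x))
    rw [quadForm_mul hR hν, mul_assoc]
  calc (2 ^ k : ℂ) * Nat.card {x : K // quadForm k t R x = 0}
      = ∑ μ ∈ T, ∑ x, psiq (k * t) (z₀ * μ * quadForm k t R x) := by rw [← hcount, sum_comm]
    _ = (2 ^ k) ^ t + (2 ^ k - 1) * ∑ x, psiq (k * t) (z₀ * quadForm k t R x) := by
      rw [← add_sum_erase T _ h0T, sum_congr rfl hsquare, sum_const, card_erase_of_mem h0T,
        card_filter_pow_two_pow_eq_self hk ht hcard, nsmul_eq_mul, Nat.cast_sub Nat.one_le_two_pow]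
      simp [psiq_zero, hcard]

theorem sum_psiq_polar (hcard : Fintype.card K = (2 ^ k) ^ t)
    (hR : ∀ μ x, μ ^ 2 ^ k = μ → R (μ * x) = μ * R x) (hz₀ : psiq (k * t) z₀ = -1) (d : K) :
    ∑ x, psiq (k * t) (z₀ * polar k t R x d)
      = if d ∈ radical k t R then (2 ^ k : ℂ) ^ t else 0 := by
  have hcard' : Fintype.card K = 2 ^ (k * t) := by rw [hcard, pow_mul]
  split_ifs with hd
  · simp only [radical, mem_filter, mem_univ, true_and] at hd
    simp [hd, psiq_zero, hcard]
  obtain ⟨x₁, hx₁⟩ : ∃ x₁, polar k t R x₁ d ≠ 0 := by simpa [radical] using hd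
  have hinv : (polar k t R x₁ d)⁻¹ ^ 2 ^ k = (polar k t R x₁ d)⁻¹ := by
    rw [inv_pow, polar, trp_pow_two_pow hcard]
  refine sum_eq_zero_of_add_mem_of_eq_neg ((polar k t R x₁ d)⁻¹ * x₁) (by simp) fun x _ => ?_
  rw [polar_add_left, polar_mul_left hR hinv, inv_mul_cancel₀ hx₁, mul_add, mul_one,
    psiq_add hcard', hz₀, mul_neg_one]

theorem sq_sum_psiq_quadForm (hcard : Fintype.card K = (2 ^ k) ^ t)
    (hR : ∀ μ x, μ ^ 2 ^ k = μ → R (μ * x) = μ * R x) (hz₀ : psiq (k * t) z₀ = -1) :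
    (∑ x, psiq (k * t) (z₀ * quadForm k t R x)) ^ 2
      = (2 ^ k) ^ t * ∑ d ∈ radical k t R, psiq (k * t) (z₀ * quadForm k t R d) := by
  have hcard' : Fintype.card K = 2 ^ (k * t) := by rw [hcard, pow_mul]
  have hshift : ∀ x d,
      psiq (k * t) (z₀ * quadForm k t R x) * psiq (k * t) (z₀ * quadForm k t R (x + d))
        = psiq (k * t) (z₀ * quadForm k t R d) * psiq (k * t) (z₀ * polar k t R x d) :=
      fun x d => by
    rw [← psiq_add hcard', ← psiq_add hcard', quadForm_add]
    congr 1
    linear_combination z₀ * quadForm k t R x * CharTwo.two_eq_zero (R := K)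
  calc (∑ x, psiq (k * t) (z₀ * quadForm k t R x)) ^ 2
      = ∑ x, ∑ d,
          psiq (k * t) (z₀ * quadForm k t R x) * psiq (k * t) (z₀ * quadForm k t R (x + d)) := by
        rw [sq, sum_mul_sum]
        exact sum_congr rfl fun x _ => (Fintype.sum_equiv (Equiv.addLeft x) _ _ fun _ => rfl).symm
    _ = ∑ d, psiq (k * t) (z₀ * quadForm k t R d) * ∑ x, psiq (k * t) (z₀ * polar k t R x d) := by
        simp only [hshift, mul_sum]
        exact sum_comm
    _ = (2 ^ k) ^ t * ∑ d ∈ radical k t R, psiq (k * t) (z₀ * quadForm k t R d) := by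
        simp only [sum_psiq_polar hcard hR hz₀, mul_ite, mul_zero, sum_ite_mem, univ_inter,
          mul_sum]
        exact sum_congr rfl fun _ _ => mul_comm _ _

theorem sum_radical_psiq_eq_zero_or_eq_card (hcard : Fintype.card K = (2 ^ k) ^ t) :
    ∑ d ∈ radical k t R, psiq (k * t) (z₀ * quadForm k t R d) = 0 ∨
      ∑ d ∈ radical k t R, psiq (k * t) (z₀ * quadForm k t R d) = #(radical k t R) := by
  have hcard' : Fintype.card K = 2 ^ (k * t) := by rw [hcard, pow_mul]
  by_cases htriv : ∀ d ∈ radical k t R, psiq (k * t) (z₀ * quadForm k t R d) = 1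
  · exact .inr (by simp [sum_congr rfl htriv])
  simp only [not_forall] at htriv
  obtain ⟨d₀, hd₀, hψ⟩ := htriv
  have hd₀' : ∀ x, polar k t R x d₀ = 0 := by simpa [radical] using hd₀
  refine .inl (sum_eq_zero_of_add_mem_of_eq_neg d₀ (fun d => ?_) fun d _ => ?_)
  · simp [radical, polar_add_right, hd₀']
  · rw [quadForm_add, hd₀', add_zero, mul_add, psiq_add hcard', psiq_eq_neg_one_of_ne_one hψ,
      mul_neg_one]

end

theorem sq_card_curve_sub_eq_zero_or_eq (hk : 0 < k) (ht : 0 < t)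
    (hcard : Fintype.card K = (2 ^ k) ^ t) (R : K →+ K)
    (hR : ∀ μ x, μ ^ 2 ^ k = μ → R (μ * x) = μ * R x) :
    ((Nat.card {z : K × K // z.2 ^ 2 ^ k + z.2 = z.1 * R z.1} : ℤ) - (2 ^ k) ^ t) ^ 2 = 0 ∨
      ((Nat.card {z : K × K // z.2 ^ 2 ^ k + z.2 = z.1 * R z.1} : ℤ) - (2 ^ k) ^ t) ^ 2
        = (2 ^ k - 1) ^ 2 * (2 ^ k) ^ t * #(radical k t R) := by
  obtain ⟨z₀, hz₀⟩ := exists_psiq_eq_neg_one (Nat.mul_pos hk ht) (by rw [hcard, pow_mul])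
  have hN : (Nat.card {z : K × K // z.2 ^ 2 ^ k + z.2 = z.1 * R z.1} : ℂ) - (2 ^ k) ^ t
      = (2 ^ k - 1) * ∑ x, psiq (k * t) (z₀ * quadForm k t R x) := by
    rw [card_curve hk ht hcard (fun x => x * R x), Nat.cast_mul, Nat.cast_pow, Nat.cast_ofNat]
    change (2 ^ k : ℂ) * Nat.card {x : K // quadForm k t R x = 0} - _ = _
    rw [two_pow_mul_card_quadForm_eq_zero hk ht hcard hR hz₀]
    ring
  have hsq : ((Nat.card {z : K × K // z.2 ^ 2 ^ k + z.2 = z.1 * R z.1} : ℂ) - (2 ^ k) ^ t) ^ 2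
      = (2 ^ k - 1) ^ 2 * (2 ^ k) ^ t
        * ∑ d ∈ radical k t R, psiq (k * t) (z₀ * quadForm k t R d) := by
    rw [hN, mul_pow, sq_sum_psiq_quadForm hcard hR hz₀, mul_assoc]
  rcases sum_radical_psiq_eq_zero_or_eq_card (R := R) (z₀ := z₀) hcard with hW | hW
  · rw [hW, mul_zero] at hsq
    exact .inl (by exact_mod_cast hsq)
  · rw [hW] at hsq
    exact .inr (by exact_mod_cast hsq)

-- For the trace form, the adjoint of `x ↦ x ^ q ^ j` is `x ↦ x ^ q ^ (t - j)`.
theorem frobSum_add_frobSum_image_sub_eq_zero_of_mem_radical (hk : 0 < k) (ht : 0 < t)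
    (hcard : Fintype.card K = (2 ^ k) ^ t) {s : Finset ℕ} (hs : ∀ j ∈ s, j ≤ t) {d : K}
    (hd : d ∈ radical k t (frobSum k s)) :
    frobSum k s d + frobSum k (s.image (t - ·)) d = 0 := by
  have hadj : ∀ x, trp (2 ^ k) t (d * frobSum k s x)
      = trp (2 ^ k) t (x * frobSum k (s.image (t - ·)) d) := fun x => by
    rw [frobSum_apply, frobSum_apply, sum_image fun i hi j hj hij => by
      have := hs i hi; have := hs j hj; omega]
    simp only [mul_sum, trp_sum]
    exact sum_congr rfl fun j hj => by rw [trp_mul_pow_pow hcard (hs j hj), mul_comm]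
  by_contra hE
  obtain ⟨z, hz⟩ := exists_trp_ne_zero hk ht hcard
  have hpolar := (mem_filter.mp hd).2 (z * (frobSum k s d + frobSum k (s.image (t - ·)) d)⁻¹)
  rw [polar, trp_add, hadj, ← trp_add, ← mul_add, mul_assoc, inv_mul_cancel₀ hE, mul_one] at hpolar
  exact hz hpolar


end FiniteCharTwo

section OddExponents

variable [Field K] [CharP K 2] {k t M : ℕ}

def oddExps (M : ℕ) : Finset ℕ := (Icc 1 M).image fun i => 2 * i - 1

theorem sum_Icc_odd_eq_frobSum (x : K) :
    ∑ i ∈ Icc 1 M, x ^ (2 ^ k) ^ (2 * i - 1) = frobSum k (oddExps M) x := by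
  rw [oddExps, frobSum_apply, sum_image fun i hi j hj hij => by
    simp only [coe_Icc, Set.mem_Icc] at hi hj; omega]

theorem trp_mul_sum_Icc_odd [Fintype K] (hcard : Fintype.card K = (2 ^ k) ^ (4 * M)) (x : K) :
    trp (2 ^ k) (4 * M) (x * ∑ i ∈ Icc 1 M, x ^ (2 ^ k) ^ (2 * i - 1))
      = trp (2 ^ (2 * k)) (2 * M) x * trp (2 ^ (2 * k)) (2 * M) x ^ 2 ^ k := by
  set g : ℕ → K := fun j => x ^ (2 ^ k) ^ j
  have hA : trp (2 ^ (2 * k)) (2 * M) x = ∑ a ∈ range (2 * M), g (2 * a) :=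
    sum_congr rfl fun a _ => by simp only [g]; congr 1; ring
  have hAq : (∑ a ∈ range (2 * M), g (2 * a)) ^ 2 ^ k = ∑ a ∈ range (2 * M), g (2 * a + 1) := by
    rw [← iterateFrobenius_def, map_sum]
    refine sum_congr rfl fun a _ => ?_
    have h := pow_pow_pow_eq_pow_pow_add x (2 ^ k) (2 * a) 1
    rwa [pow_one] at h
  have hL : trp (2 ^ k) (4 * M) (x * ∑ i ∈ Icc 1 M, x ^ (2 ^ k) ^ (2 * i - 1))
      = ∑ l ∈ range (4 * M), ∑ b ∈ range M, g l * g (l + (2 * b + 1)) := by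
    rw [sum_Icc_one_eq_sum_range]
    refine sum_congr rfl fun l _ => ?_
    rw [mul_pow, pow_two_pow_pow_eq_iterateFrobenius (∑ _ ∈ _, _), map_sum, mul_sum]
    refine sum_congr rfl fun b _ => ?_
    rw [← pow_two_pow_pow_eq_iterateFrobenius, pow_pow_pow_eq_pow_pow_add]
    simp only [g, show 2 * (b + 1) - 1 + l = l + (2 * b + 1) by omega]
  rw [hL, hA, hAq]
  exact (periodic_pow_pow hcard x).sum_sum_mul_add_odd_eq

theorem card_curve_sum_Icc_odd [Fintype K] (hk : 0 < k) (hM : 0 < M)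
    (hcard : Fintype.card K = (2 ^ k) ^ (4 * M)) :
    Nat.card {z : K × K // z.2 ^ 2 ^ k + z.2 = z.1 * ∑ i ∈ Icc 1 M, z.1 ^ (2 ^ k) ^ (2 * i - 1)}
      = (2 ^ k) ^ (4 * M - 1) := by
  have hcard' : Fintype.card K = (2 ^ (2 * k)) ^ (2 * M) := by rw [hcard]; ring
  rw [card_curve hk (by omega) hcard (fun x => x * ∑ i ∈ Icc 1 M, x ^ (2 ^ k) ^ (2 * i - 1)),
    Nat.card_congr (Equiv.subtypeEquivRight fun x => by
      rw [trp_mul_sum_Icc_odd hcard, mul_eq_zero, pow_eq_zero_iff (by positivity), or_self]),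
    card_trp_eq_zero (by omega) (by omega) hcard', ← pow_mul, ← pow_mul, ← pow_add]
  obtain ⟨M, rfl⟩ := Nat.exists_eq_add_one_of_ne_zero hM.ne'
  rw [show 2 * (M + 1) - 1 = 2 * M + 1 by omega, show 4 * (M + 1) - 1 = 4 * M + 3 by omega]
  ring

theorem card_radical_oddExps_lt [Fintype K] (hk : 0 < k) (hM : 2 ≤ M) (ht : 0 < t) (htM : t < 4 * M)
    (hcard : Fintype.card K = (2 ^ k) ^ t) :
    #(radical k t (frobSum (K := K) k (oddExps M))) < (2 ^ k) ^ (4 * M - 2) := by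
  have hq : 1 < 2 ^ k := Nat.one_lt_two_pow hk.ne'
  rcases lt_or_ge t (4 * M - 2) with hsmall | hlarge
  · calc #(radical k t (frobSum k (oddExps M))) ≤ Fintype.card K := card_le_univ _
      _ < (2 ^ k) ^ (4 * M - 2) := hcard ▸ Nat.pow_lt_pow_right hq hsmall
  have hmem : ∀ j, j ∈ oddExps M ↔ ∃ i, (1 ≤ i ∧ i ≤ M) ∧ 2 * i - 1 = j := by
    simp [oddExps]
  have hle : ∀ j ∈ oddExps M, j ≤ t := fun j hj => by
    obtain ⟨i, hi, rfl⟩ := (hmem j).mp hj; omega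
  -- The exponents of `R + R*`: those occurring in both cancel in characteristic two.
  set s := symmDiff (oddExps M) ((oddExps M).image (t - ·))
  have hs : s.Nonempty := ⟨1, mem_symmDiff.mpr <| .inl ⟨(hmem 1).mpr ⟨1, by omega, rfl⟩, by
    simp only [mem_image, not_exists, not_and]
    intro j hj; obtain ⟨i, hi, rfl⟩ := (hmem j).mp hj; omega⟩⟩
  have hsD : ∀ j ∈ s, 1 ≤ j ∧ j ≤ 1 + (4 * M - 3) := fun j hj => by
    rcases mem_symmDiff.mp hj with ⟨hj, -⟩ | ⟨hj, -⟩
    · obtain ⟨i, hi, rfl⟩ := (hmem j).mp hj; omega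
    · obtain ⟨j', hj', rfl⟩ := mem_image.mp hj
      obtain ⟨i, hi, rfl⟩ := (hmem j').mp hj'; omega
  calc #(radical k t (frobSum k (oddExps M)))
      ≤ Nat.card {d : K // frobSum k s d = 0} := by
        rw [Nat.card_eq_fintype_card, Fintype.card_subtype]
        refine card_le_card fun d hd => mem_filter.mpr ⟨mem_univ _, ?_⟩
        rw [frobSum_apply, ← CharTwo.sum_add_sum_eq_sum_symmDiff]
        exact frobSum_add_frobSum_image_sub_eq_zero_of_mem_radical hk ht hcard hle hd
    _ ≤ (2 ^ k) ^ (4 * M - 3) := card_frobSum_eq_zero_le hk hs hsD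
    _ < (2 ^ k) ^ (4 * M - 2) := Nat.pow_lt_pow_right hq (by omega)

end OddExponents

theorem fintype_card_galoisField_two (k n : ℕ) (h : k * n ≠ 0) [Fintype (GaloisField 2 (k * n))] :
    Fintype.card (GaloisField 2 (k * n)) = (2 ^ k) ^ n := by
  rw [← Nat.card_eq_fintype_card, GaloisField.card 2 _ h, pow_mul]

/-- For even `m ≥ 4` and `R(x) = ∑_{i=1}^{m/2} x^{p^{2i-1}}`,
the curve `C_R` is `𝔽_{p^{2m}}`-minimal and not `𝔽_{p^t}`-extremal for `t < 2m`:
its `𝔽_p`-period is `2m` and its parity is `+1`. -/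
theorem statement16 (k m : ℕ) (hk : 1 ≤ k) (hm : 4 ≤ m) (hme : Even m) :
    (Nat.card {z : GaloisField 2 (k * (2 * m)) × GaloisField 2 (k * (2 * m)) //
        z.2 ^ 2 ^ k + z.2
          = z.1 * ∑ i ∈ Finset.Icc 1 (m / 2), z.1 ^ (2 ^ k) ^ (2 * i - 1)} : ℤ)
      = 2 ^ (k * (2 * m)) - (2 ^ k - 1) * 2 ^ (k * (2 * m - 1)) ∧
    ∀ t : ℕ, 1 ≤ t → t < 2 * m →
      ((Nat.card {z : GaloisField 2 (k * t) × GaloisField 2 (k * t) //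
          z.2 ^ 2 ^ k + z.2
            = z.1 * ∑ i ∈ Finset.Icc 1 (m / 2), z.1 ^ (2 ^ k) ^ (2 * i - 1)} : ℤ)
          - 2 ^ (k * t)) ^ 2
        ≠ (2 ^ k - 1) ^ 2 * (2 ^ k) ^ (2 * (m - 1)) * 2 ^ (k * t) := by
  obtain ⟨M, rfl⟩ := hme
  rw [show (M + M) / 2 = M by omega, show 2 * (M + M) = 4 * M by ring,
    show 2 * (M + M - 1) = 4 * M - 2 by omega]
  constructor
  · let _ := Fintype.ofFinite (GaloisField 2 (k * (4 * M)))
    rw [card_curve_sum_Icc_odd hk (by omega)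
        (fintype_card_galoisField_two k _ (Nat.mul_ne_zero (by omega) (by omega))),
      show k * (4 * M) = k * (4 * M - 1) + k by rw [← Nat.mul_succ]; congr 1; omega, pow_add,
      pow_mul]
    push_cast
    ring
  · intro t ht htM hext
    let _ := Fintype.ofFinite (GaloisField 2 (k * t))
    have hcard := fintype_card_galoisField_two k t (by positivity)
    rw [Nat.card_congr (Equiv.subtypeEquivRight fun z => by rw [sum_Icc_odd_eq_frobSum]),
      pow_mul] at hext
    have hq : (0 : ℤ) < 2 ^ k - 1 := by linarith [Nat.one_lt_two_pow (n := k) (by omega)]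
    rcases sq_card_curve_sub_eq_zero_or_eq hk ht hcard _ fun μ x hμ => frobSum_mul_left _ hμ x
      with h | h
    · rw [h] at hext
      exact absurd hext.symm (by positivity)
    · rw [h, mul_right_comm] at hext
      have := card_radical_oddExps_lt (K := GaloisField 2 (k * t)) hk (by omega) ht htM hcard
      exact absurd (mul_left_cancel₀ (by positivity) (mul_right_cancel₀ (by positivity) hext))
        (by exact_mod_cast this.ne)

end
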